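/- For the source-free linear CGNN dynamics Ḟ(t) = −ΔF(t) + F(t)Ω̃ with Ω̃ symmetric, the normalized Dirichlet energy satisfies E^Dir(F(t)/‖F(t)‖) ≤ C e^{−gap(Δ)·t} for all large t and almost every F(0); hence the system is low-frequency dominant and never high-frequency dominant, independent of Ω̃. -/

import Mathlib

/-!
In the orthonormal eigenbases `φ` of `Δ` and `ψ` of `Ω̃` (the rows of `Φ` and `Ψ`), the spectral
coefficients `M(t) = Φ F(t) Ψᵀ` decouple: `M_{lr}(t) = e^{(ν_r - λ_l) t} M_{lr}(0)`. The Dirichlet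
energy and the squared norm become `∑ λ_l M_{lr}²` and `∑ M_{lr}²`. Relative to `e^{2 ν_max t}`,
every energy term with `l ≠ l₀` decays at least like `e^{-gap(Δ) t}`, while the norm keeps the
non-decaying term `M_{l₀r₀}(0)² ≠ 0` with `ν_{r₀} = ν_max`. So the quotient decays exponentially
and cannot tend to `λ_max > 0`.
-/

open Matrix Finset Filter

theorem eq_exp_mul_of_hasDerivAt {k : ℝ} {f : ℝ → ℝ} (hf : ∀ t, HasDerivAt f (k * f t) t)
    (t : ℝ) : f t = Real.exp (k * t) * f 0 := by
  have hconst : ∀ s, HasDerivAt (fun u => Real.exp (-(k * u)) * f u) 0 s := by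
    intro s
    have hexp : HasDerivAt (fun u => Real.exp (-(k * u))) (Real.exp (-(k * s)) * -k) s :=
      ((hasDerivAt_id s).const_mul k).neg.exp.congr_deriv (by simp)
    exact (hexp.mul (hf s)).congr_deriv (by ring)
  have h := is_const_of_deriv_eq_zero (fun u => (hconst u).differentiableAt)
    (fun u => (hconst u).deriv) t 0
  simp only [mul_zero, neg_zero, Real.exp_zero, one_mul] at h
  rw [← h, ← mul_assoc, ← Real.exp_add, add_neg_cancel, Real.exp_zero, one_mul]

theorem not_tendsto_of_eventually_le_mul_exp {f : ℝ → ℝ} {C g L : ℝ} (hg : 0 < g) (hL : 0 < L)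
    (hf : ∀ᶠ t in atTop, f t ≤ C * Real.exp (-(g * t))) : ¬ Tendsto f atTop (nhds L) := by
  intro hfL
  have hdecay : Tendsto (fun t => C * Real.exp (-(g * t))) atTop (nhds 0) := by
    simpa using (Real.tendsto_exp_neg_atTop_nhds_zero.comp
      (tendsto_id.const_mul_atTop hg)).const_mul C
  linarith [le_of_tendsto_of_tendsto hfL hdecay hf]

section Matrix

variable {ι κ R : Type*} [Fintype ι] [Fintype κ] [CommRing R]

theorem of_mul_mul_transpose_apply (φ : ι → ι → R) (ψ : κ → κ → R) (X : Matrix ι κ R)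
    (l : ι) (r : κ) :
    (of φ * X * (of ψ)ᵀ) l r =
      (fun p : κ × ι => X p.2 p.1) ⬝ᵥ fun p : κ × ι => ψ r p.1 * φ l p.2 := by
  simp only [mul_apply, of_apply, transpose_apply, dotProduct, Fintype.sum_prod_type, sum_mul]
  refine sum_congr rfl fun j _ => sum_congr rfl fun i _ => ?_
  ring

theorem trace_transpose_mul_self (A : Matrix ι κ R) : (Aᵀ * A).trace = ∑ i, ∑ j, A i j ^ 2 := by
  simp only [trace, Matrix.diag, mul_apply, transpose_apply, sq]
  exact sum_comm

variable [DecidableEq ι]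

theorem trace_transpose_mul_diagonal_mul (A : Matrix ι κ R) (w : ι → R) :
    (Aᵀ * diagonal w * A).trace = ∑ i, ∑ j, w i * A i j ^ 2 := by
  simp only [trace, Matrix.diag, mul_apply, transpose_apply, diagonal_apply, mul_ite, mul_zero,
    sum_ite_eq', mem_univ, if_true, sq]
  rw [sum_comm]
  exact sum_congr rfl fun i _ => sum_congr rfl fun j _ => by ring

theorem of_mul_transpose_eq_one {φ : ι → ι → R}
    (hφ : ∀ k l, φ k ⬝ᵥ φ l = if k = l then 1 else 0) : of φ * (of φ)ᵀ = 1 := by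
  ext k l
  exact mul_apply'.trans ((hφ k l).trans Matrix.one_apply.symm)

theorem of_mul_mul_transpose_eq_diagonal {φ : ι → ι → R} {A : Matrix ι ι R} {lam : ι → R}
    (hφ : ∀ k l, φ k ⬝ᵥ φ l = if k = l then 1 else 0) (hA : ∀ l, A *ᵥ φ l = lam l • φ l) :
    of φ * A * (of φ)ᵀ = diagonal lam := by
  have hcols : A * (of φ)ᵀ = (of φ)ᵀ * diagonal lam := by
    ext i l
    simpa [mul_apply, mulVec, dotProduct, diagonal_apply, mul_comm] using congrFun (hA l) i
  rw [Matrix.mul_assoc, hcols, ← Matrix.mul_assoc, of_mul_transpose_eq_one hφ, Matrix.one_mul]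

variable [DecidableEq κ] {P : Matrix ι ι R} {Q : Matrix κ κ R}

theorem conj_neg_mul_add_mul (hP : Pᵀ * P = 1) (hQ : Qᵀ * Q = 1) (A : Matrix ι ι R)
    (X : Matrix ι κ R) (B : Matrix κ κ R) :
    P * (-(A * X) + X * B) * Qᵀ =
      -(P * A * Pᵀ * (P * X * Qᵀ)) + P * X * Qᵀ * (Q * B * Qᵀ) := by
  have hPP : P * A * Pᵀ * (P * X * Qᵀ) = P * (A * X) * Qᵀ := by
    simp only [Matrix.mul_assoc]
    rw [← Matrix.mul_assoc Pᵀ P, hP, Matrix.one_mul]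
  have hQQ : P * X * Qᵀ * (Q * B * Qᵀ) = P * (X * B) * Qᵀ := by
    simp only [Matrix.mul_assoc]
    rw [← Matrix.mul_assoc Qᵀ Q, hQ, Matrix.one_mul]
  rw [hPP, hQQ, Matrix.mul_add, Matrix.add_mul, Matrix.mul_neg, Matrix.neg_mul]

theorem trace_conj_transpose_mul_mul (hP : Pᵀ * P = 1) (hQ : Qᵀ * Q = 1) (X : Matrix ι κ R)
    (A : Matrix ι ι R) :
    ((P * X * Qᵀ)ᵀ * (P * A * Pᵀ) * (P * X * Qᵀ)).trace = (Xᵀ * A * X).trace := by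
  simp only [transpose_mul, transpose_transpose, Matrix.mul_assoc]
  rw [← Matrix.mul_assoc Pᵀ P, hP, Matrix.one_mul, ← Matrix.mul_assoc Pᵀ P, hP, Matrix.one_mul,
    trace_mul_comm]
  simp only [Matrix.mul_assoc, hQ, Matrix.mul_one]

theorem trace_conj_transpose_mul_self (hP : Pᵀ * P = 1) (hQ : Qᵀ * Q = 1) (X : Matrix ι κ R) :
    ((P * X * Qᵀ)ᵀ * (P * X * Qᵀ)).trace = (Xᵀ * X).trace := by
  have h := trace_conj_transpose_mul_mul hP hQ X 1
  rwa [Matrix.mul_one, mul_eq_one_comm.mp hP, Matrix.mul_one, Matrix.mul_one] at h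

end Matrix

theorem hasDerivAt_mul_mul_apply {ι κ ι' κ' : Type*} [Fintype ι] [Fintype κ]
    {F : ℝ → Matrix ι κ ℝ} {F' : Matrix ι κ ℝ} {t : ℝ}
    (hF : ∀ i j, HasDerivAt (fun s => F s i j) (F' i j) t) (A : Matrix ι' ι ℝ)
    (B : Matrix κ κ' ℝ) (i : ι') (j : κ') :
    HasDerivAt (fun s => (A * F s * B) i j) ((A * F' * B) i j) t := by
  simp only [mul_apply]
  exact HasDerivAt.fun_sum fun x _ =>
    (HasDerivAt.fun_sum fun y _ => (hF y x).const_mul (A i y)).mul_const (B x j)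

theorem spectral_coeff_eq_exp {ι κ : Type*} [Fintype ι] [Fintype κ] [DecidableEq ι]
    [DecidableEq κ] {Δ : Matrix ι ι ℝ} {Om : Matrix κ κ ℝ} {φ : ι → ι → ℝ} {lam : ι → ℝ}
    {ψ : κ → κ → ℝ} {ν : κ → ℝ}
    (hφON : ∀ k l, φ k ⬝ᵥ φ l = if k = l then 1 else 0) (hφ : ∀ l, Δ *ᵥ φ l = lam l • φ l)
    (hψON : ∀ r s, ψ r ⬝ᵥ ψ s = if r = s then 1 else 0) (hψ : ∀ r, Om *ᵥ ψ r = ν r • ψ r)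
    {F : ℝ → Matrix ι κ ℝ}
    (hF : ∀ t i r, HasDerivAt (fun s => F s i r) ((-(Δ * F t) + F t * Om) i r) t)
    (t : ℝ) (l : ι) (r : κ) :
    (of φ * F t * (of ψ)ᵀ) l r = Real.exp ((ν r - lam l) * t) * (of φ * F 0 * (of ψ)ᵀ) l r := by
  have hP := mul_eq_one_comm.mp (of_mul_transpose_eq_one hφON)
  have hQ := mul_eq_one_comm.mp (of_mul_transpose_eq_one hψON)
  refine eq_exp_mul_of_hasDerivAt (f := fun s => (of φ * F s * (of ψ)ᵀ) l r) (fun s => ?_) t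
  refine (hasDerivAt_mul_mul_apply (hF s) _ _ l r).congr_deriv ?_
  rw [conj_neg_mul_add_mul hP hQ, of_mul_mul_transpose_eq_diagonal hφON hφ,
    of_mul_mul_transpose_eq_diagonal hψON hψ]
  simp only [Matrix.add_apply, Matrix.neg_apply, diagonal_mul, mul_diagonal]
  ring

theorem mul_exp_sq_le_of_gap {lam ν K g Λ t : ℝ} (hlam : lam = 0 ∨ g ≤ lam) (hΛ : lam ≤ Λ)
    (hΛ0 : 0 ≤ Λ) (hg : 0 ≤ g) (hν : ν ≤ K) (ht : 0 ≤ t) :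
    lam * Real.exp ((ν - lam) * t) ^ 2 ≤ Λ * Real.exp (-(g * t)) * Real.exp (K * t) ^ 2 := by
  rcases hlam with rfl | hgap
  · rw [zero_mul]; positivity
  have hexp : Real.exp ((ν - lam) * t) ^ 2 ≤ Real.exp (-(g * t)) * Real.exp (K * t) ^ 2 := by
    rw [sq, sq, ← Real.exp_add, ← Real.exp_add, ← Real.exp_add, Real.exp_le_exp]
    nlinarith [mul_nonneg (sub_nonneg.mpr hν) ht, mul_nonneg (sub_nonneg.mpr hgap) ht,
      mul_nonneg hg ht]
  calc lam * Real.exp ((ν - lam) * t) ^ 2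
      ≤ Λ * (Real.exp (-(g * t)) * Real.exp (K * t) ^ 2) :=
        mul_le_mul hΛ hexp (by positivity) hΛ0
    _ = Λ * Real.exp (-(g * t)) * Real.exp (K * t) ^ 2 := by ring

theorem spectral_rayleigh_quotient_le {ι κ : Type*} [Fintype ι] [Fintype κ] {lam : ι → ℝ}
    {ν : κ → ℝ} {a c : ι → κ → ℝ} {l0 : ι} {r0 : κ} {g Λ t : ℝ}
    (hl0 : lam l0 = 0) (hgap : ∀ l, l ≠ l0 → g ≤ lam l) (hΛ : ∀ l, lam l ≤ Λ) (hg : 0 ≤ g)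
    (hr0 : ∀ r, ν r ≤ ν r0) (ha : a l0 r0 ≠ 0) (ht : 0 ≤ t)
    (hc : ∀ l r, c l r = Real.exp ((ν r - lam l) * t) * a l r) :
    (∑ l, ∑ r, lam l * c l r ^ 2) / (∑ l, ∑ r, c l r ^ 2)
      ≤ Λ * (∑ l, ∑ r, a l r ^ 2) / a l0 r0 ^ 2 * Real.exp (-(g * t)) := by
  set E := Real.exp (ν r0 * t)
  have hΛ0 : 0 ≤ Λ := hl0 ▸ hΛ l0
  have hnum :
      ∑ l, ∑ r, lam l * c l r ^ 2 ≤ Λ * Real.exp (-(g * t)) * E ^ 2 * ∑ l, ∑ r, a l r ^ 2 := by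
    simp only [mul_sum]
    refine sum_le_sum fun l _ => sum_le_sum fun r _ => ?_
    have hlam : lam l = 0 ∨ g ≤ lam l := (em (l = l0)).imp (fun h => by rw [h, hl0]) (hgap l)
    rw [hc, mul_pow, ← mul_assoc]
    exact mul_le_mul_of_nonneg_right
      (mul_exp_sq_le_of_gap hlam (hΛ l) hΛ0 hg (hr0 r) ht) (sq_nonneg _)
  have hden : E ^ 2 * a l0 r0 ^ 2 ≤ ∑ l, ∑ r, c l r ^ 2 := by
    have hterm : c l0 r0 ^ 2 = E ^ 2 * a l0 r0 ^ 2 := by rw [hc, hl0, sub_zero, mul_pow]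
    rw [← hterm]
    exact (single_le_sum (fun r _ => sq_nonneg (c l0 r)) (mem_univ r0)).trans
      (single_le_sum (f := fun l => ∑ r, c l r ^ 2)
        (fun l _ => sum_nonneg fun r _ => sq_nonneg _) (mem_univ l0))
  have hden0 : 0 < E ^ 2 * a l0 r0 ^ 2 := by positivity
  rw [div_le_iff₀ (hden0.trans_le hden)]
  set C := Λ * (∑ l, ∑ r, a l r ^ 2) / a l0 r0 ^ 2
  calc ∑ l, ∑ r, lam l * c l r ^ 2
      ≤ Λ * Real.exp (-(g * t)) * E ^ 2 * ∑ l, ∑ r, a l r ^ 2 := hnum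
    _ = C * Real.exp (-(g * t)) * (E ^ 2 * a l0 r0 ^ 2) := by simp only [C]; field_simp
    _ ≤ C * Real.exp (-(g * t)) * ∑ l, ∑ r, c l r ^ 2 := by gcongr

theorem CGNN_always_LFD_general (n d : ℕ)
    (Δ : Matrix (Fin n) (Fin n) ℝ)
    (Om : Matrix (Fin d) (Fin d) ℝ)
    (φ : Fin n → Fin n → ℝ) (lam : Fin n → ℝ)
    (hφON : ∀ k l, φ k ⬝ᵥ φ l = if k = l then (1 : ℝ) else 0)
    (hφ : ∀ l, Δ.mulVec (φ l) = lam l • φ l)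
    (ψ : Fin d → Fin d → ℝ) (ν : Fin d → ℝ)
    (hψON : ∀ r s, ψ r ⬝ᵥ ψ s = if r = s then (1 : ℝ) else 0)
    (hψ : ∀ r, Om.mulVec (ψ r) = ν r • ψ r)
    -- connected graph: λ_0 = 0 (index l0), all other eigenvalues ≥ gap(Δ) > 0
    (l0 : Fin n) (hl0 : lam l0 = 0)
    (gΔ : ℝ) (hgΔpos : 0 < gΔ) (hgap : ∀ l, l ≠ l0 → gΔ ≤ lam l)
    (lamMax : ℝ) (hlamMax : IsGreatest (Set.range lam) lamMax)
    (F : ℝ → Matrix (Fin n) (Fin d) ℝ)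
    (hF : ∀ t i r, HasDerivAt (fun s => F s i r) ((-(Δ * F t) + F t * Om) i r) t)
    -- generic F(0): nonzero projection onto (top eigenspace of Ω̃) ⊗ ker Δ
    (hgen : ∃ r : Fin d, (∀ s, ν s ≤ ν r) ∧
      ((fun p : Fin d × Fin n => F 0 p.2 p.1) ⬝ᵥ
        fun p : Fin d × Fin n => ψ r p.1 * φ l0 p.2) ≠ 0) :
    (∃ C : ℝ, ∀ᶠ t in atTop,
      ((F t)ᵀ * Δ * F t).trace / (∑ i, ∑ r, (F t i r) ^ 2)
        ≤ C * Real.exp (-(gΔ * t))) ∧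
    (0 < lamMax → ¬ Tendsto
      (fun t => ((F t)ᵀ * Δ * F t).trace / (∑ i, ∑ r, (F t i r) ^ 2))
      atTop (nhds lamMax)) := by
  obtain ⟨r0, hr0, hproj⟩ := hgen
  set M : ℝ → Matrix (Fin n) (Fin d) ℝ := fun t => of φ * F t * (of ψ)ᵀ
  have hP : (of φ)ᵀ * of φ = 1 := mul_eq_one_comm.mp (of_mul_transpose_eq_one hφON)
  have hQ : (of ψ)ᵀ * of ψ = 1 := mul_eq_one_comm.mp (of_mul_transpose_eq_one hψON)
  have hquot : ∀ t, ((F t)ᵀ * Δ * F t).trace / (∑ i, ∑ r, (F t i r) ^ 2) =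
      (∑ l, ∑ r, lam l * M t l r ^ 2) / ∑ l, ∑ r, M t l r ^ 2 := fun t => by
    rw [← trace_transpose_mul_self, ← trace_transpose_mul_self,
      ← trace_transpose_mul_diagonal_mul, ← of_mul_mul_transpose_eq_diagonal hφON hφ,
      trace_conj_transpose_mul_mul hP hQ, trace_conj_transpose_mul_self hP hQ]
  have hM0 : M 0 l0 r0 ≠ 0 := by
    rwa [show M 0 l0 r0 = _ from of_mul_mul_transpose_apply φ ψ (F 0) l0 r0]
  have hbound : ∀ t ≥ 0, ((F t)ᵀ * Δ * F t).trace / (∑ i, ∑ r, (F t i r) ^ 2) ≤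
      lamMax * (∑ l, ∑ r, M 0 l r ^ 2) / M 0 l0 r0 ^ 2 * Real.exp (-(gΔ * t)) := fun t ht => by
    rw [hquot]
    exact spectral_rayleigh_quotient_le hl0 hgap (fun l => hlamMax.2 ⟨l, rfl⟩) hgΔpos.le hr0 hM0
      ht (spectral_coeff_eq_exp hφON hφ hψON hψ hF t)
  have hev := eventually_atTop.2 ⟨0, hbound⟩
  exact ⟨⟨_, hev⟩, fun hpos => not_tendsto_of_eventually_le_mul_exp hgΔpos hpos hev⟩

/-- Source-free linear CGNN Ḟ(t) = −ΔF(t) + F(t)Ω̃ with Ω̃ symmetric: for almost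
every F(0) the normalized Dirichlet energy satisfies
E^Dir(F(t)/‖F(t)‖) ≤ C e^{−gap(Δ)·t} for all large t; hence the system is
low-frequency dominant and never high-frequency dominant, independent of Ω̃. -/
theorem CGNN_always_LFD (n d : ℕ)
    (Δ : Matrix (Fin n) (Fin n) ℝ)
    (Om : Matrix (Fin d) (Fin d) ℝ) (hOm : Om.IsSymm)
    (φ : Fin n → Fin n → ℝ) (lam : Fin n → ℝ)
    (hφON : ∀ k l, φ k ⬝ᵥ φ l = if k = l then (1 : ℝ) else 0)
    (hφ : ∀ l, Δ.mulVec (φ l) = lam l • φ l)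
    (ψ : Fin d → Fin d → ℝ) (ν : Fin d → ℝ)
    (hψON : ∀ r s, ψ r ⬝ᵥ ψ s = if r = s then (1 : ℝ) else 0)
    (hψ : ∀ r, Om.mulVec (ψ r) = ν r • ψ r)
    -- connected graph: λ_0 = 0 (index l0), all other eigenvalues ≥ gap(Δ) > 0
    (l0 : Fin n) (hl0 : lam l0 = 0)
    (gΔ : ℝ) (hgΔpos : 0 < gΔ) (hgap : ∀ l, l ≠ l0 → gΔ ≤ lam l)
    (lamMax : ℝ) (hlamMax : IsGreatest (Set.range lam) lamMax)
    (F : ℝ → Matrix (Fin n) (Fin d) ℝ)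
    (hF : ∀ t i r, HasDerivAt (fun s => F s i r) ((-(Δ * F t) + F t * Om) i r) t)
    -- generic F(0): nonzero projection onto (top eigenspace of Ω̃) ⊗ ker Δ
    (hgen : ∃ r : Fin d, (∀ s, ν s ≤ ν r) ∧
      ((fun p : Fin d × Fin n => F 0 p.2 p.1) ⬝ᵥ
        fun p : Fin d × Fin n => ψ r p.1 * φ l0 p.2) ≠ 0) :
    (∃ C : ℝ, ∀ᶠ t in atTop,
      ((F t)ᵀ * Δ * F t).trace / (∑ i, ∑ r, (F t i r) ^ 2)
        ≤ C * Real.exp (-(gΔ * t))) ∧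
    (0 < lamMax → ¬ Tendsto
      (fun t => ((F t)ᵀ * Δ * F t).trace / (∑ i, ∑ r, (F t i r) ^ 2))
      atTop (nhds lamMax)) :=
  CGNN_always_LFD_general n d Δ Om φ lam hφON hφ ψ ν hψON hψ l0 hl0 gΔ hgΔpos hgap lamMax hlamMax F
    hF hgen
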